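/- Let R > 0 and 0 < c₁ ≤ c₂. Let Ẽ : [0,R] → ℝ be twice continuously differentiable with Ẽ′(0) = 0 and c₁ ≤ Ẽ″(u) ≤ c₂ for all u ∈ [0,R]. Then there is a constant c > 0 depending only on c₁ and c₂ such that for all p̄ > 0 and r > 0 with p̄ + r ≤ R, all t > 0, all ε ∈ (0,1], and every f : [0,π] × [0,2π] → ℂ which is continuous with continuous partial derivative ∂_θ f: |∫₀^{2π} ∫₀^{π} e^{−i Ẽ(√(p̄² − 2 p̄ r cosθ + r²)) t} f(θ,φ) sinθ dθ dφ| ≤ c · ( ε · sup|f| + (1/(p̄ r t ε)) · sup(|f| + |∂_θ f|) ), with suprema over [0,π]×[0,2π]. -/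

import Mathlib

/-!
Write `s(θ) = |p - r e(θ)|`, so that `s s' = p̄ r sin θ`. The phase
`θ ↦ t Ẽ(s(θ))` has derivative `t (Ẽ'(s)/s) p̄ r sin θ`, and `Ẽ'(s)/s ∈ [c₁, c₂]` because
`Ẽ'(0) = 0` and `c₁ ≤ Ẽ'' ≤ c₂`. The factor `sin θ` of the integrand therefore cancels against
the derivative of the phase, and one integration by parts gains `1/(t p̄ r)`, at the cost of
`(Ẽ'(s)/s)'`, which is of size `(c₂ - c₁) s'/s ≤ (c₂ - c₁)/ε` as long as `s² ≥ p̄ r ε`.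
That holds outside the polar caps `1 - cos θ < ε/2`, and on the caps the trivial bound
`∫ |f| sin θ dθ ≤ ε/2 · sup |f|` suffices. The `φ`-integral only contributes a factor `2π`.
-/

open Set MeasureTheory Real
open Complex (I)

theorem intervalIntegrable_of_hasDerivAt_of_norm_le {F : Type*} [NormedAddCommGroup F]
    [NormedSpace ℝ F] [CompleteSpace F] [MeasurableSpace F] [BorelSpace F]
    [SecondCountableTopology F] {f f' : ℝ → F} {a b M : ℝ} (hab : a ≤ b)
    (hf : ∀ x ∈ Icc a b, HasDerivAt f (f' x) x) (hM : ∀ x ∈ Icc a b, ‖f' x‖ ≤ M) :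
    IntervalIntegrable f' volume a b := by
  refine IntervalIntegrable.congr (f := deriv f) (fun x hx => ?_) ?_
  · rw [uIoc_of_le hab] at hx
    exact (hf x (Ioc_subset_Icc_self hx)).deriv
  rw [intervalIntegrable_iff_integrableOn_Ioc_of_le hab]
  refine Measure.integrableOn_of_bounded (M := M) measure_Ioc_lt_top.ne
    (measurable_deriv f).aestronglyMeasurable ?_
  filter_upwards [ae_restrict_mem measurableSet_Ioc] with x hx
  rw [(hf x (Ioc_subset_Icc_self hx)).deriv]
  exact hM x (Ioc_subset_Icc_self hx)

theorem norm_integral_le_of_eq_exp_mul_I_mul {F w w' : ℝ → ℂ} {φ ψ : ℝ → ℝ} {a b M : ℝ}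
    (hab : a ≤ b) (hφ : ∀ x ∈ Icc a b, HasDerivAt φ (ψ x) x)
    (hw : ∀ x ∈ Icc a b, HasDerivAt w (w' x) x) (hM : ∀ x ∈ Icc a b, ‖w' x‖ ≤ M)
    (hF : ∀ x ∈ Icc a b, F x = Complex.exp (φ x * I) * (ψ x * I * w x))
    (hFint : IntervalIntegrable F volume a b) :
    ‖∫ x in a..b, F x‖ ≤ ‖w a‖ + ‖w b‖ + M * (b - a) := by
  set e : ℝ → ℂ := fun x => Complex.exp (φ x * I)
  have he : ∀ x ∈ Icc a b, HasDerivAt e (e x * (ψ x * I)) x := fun x hx =>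
    ((hφ x hx).ofReal_comp.mul_const I).cexp
  have hew' : IntervalIntegrable (fun x => e x * w' x) volume a b :=
    (intervalIntegrable_of_hasDerivAt_of_norm_le hab hw hM).continuousOn_mul fun x hx =>
      (he x (by rwa [uIcc_of_le hab] at hx)).continuousAt.continuousWithinAt
  have hibp : ∫ x in a..b, F x = (e b * w b - e a * w a) - ∫ x in a..b, e x * w' x := by
    have hftc := intervalIntegral.integral_eq_sub_of_hasDerivAt (f := fun x => e x * w x)
      (f' := fun x => F x + e x * w' x) (fun x hx => ?_) (hFint.add hew')
    · rw [intervalIntegral.integral_add hFint hew'] at hftc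
      linear_combination hftc
    rw [uIcc_of_le hab] at hx
    refine ((he x hx).mul (hw x hx)).congr_deriv ?_
    rw [hF x hx]
    ring
  have hnorm_e : ∀ x, ‖e x‖ = 1 := fun x => Complex.norm_exp_ofReal_mul_I (φ x)
  have hrest : ‖∫ x in a..b, e x * w' x‖ ≤ M * (b - a) := by
    refine (intervalIntegral.norm_integral_le_of_norm_le_const fun x hx => ?_).trans_eq
      (by rw [abs_of_nonneg (sub_nonneg.2 hab)])
    rw [uIoc_of_le hab] at hx
    rw [norm_mul, hnorm_e, one_mul]
    exact hM x (Ioc_subset_Icc_self hx)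
  rw [hibp]
  calc ‖e b * w b - e a * w a - ∫ x in a..b, e x * w' x‖
      ≤ ‖e b * w b‖ + ‖e a * w a‖ + ‖∫ x in a..b, e x * w' x‖ :=
        (norm_sub_le _ _).trans (add_le_add_left (norm_sub_le _ _) _)
    _ ≤ ‖w a‖ + ‖w b‖ + M * (b - a) := by
        rw [norm_mul, norm_mul, hnorm_e, hnorm_e, one_mul, one_mul]
        linarith

theorem norm_exp_neg_I_mul_mul (x t : ℝ) : ‖Complex.exp (-I * x * t)‖ = 1 := by
  rw [show -I * x * t = ((-(x * t) : ℝ) : ℂ) * I by push_cast; ring]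
  exact Complex.norm_exp_ofReal_mul_I _

theorem norm_integral_mul_sin_le {g : ℝ → ℂ} {a b B : ℝ} (ha : 0 ≤ a) (hab : a ≤ b) (hb : b ≤ π)
    (hg : ∀ x ∈ Icc a b, ‖g x‖ ≤ B) :
    ‖∫ x in a..b, g x * sin x‖ ≤ B * (cos a - cos b) := by
  rw [← integral_sin, ← intervalIntegral.integral_const_mul]
  refine intervalIntegral.norm_integral_le_of_norm_le hab
    (Filter.Eventually.of_forall fun x hx => ?_)
    ((continuous_const.mul continuous_sin).intervalIntegrable _ _)
  have hsin : 0 ≤ sin x := sin_nonneg_of_nonneg_of_le_pi (ha.trans hx.1.le) (hx.2.trans hb)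
  rw [norm_mul, Complex.norm_real, norm_of_nonneg hsin]
  exact mul_le_mul_of_nonneg_right (hg x (Ioc_subset_Icc_self hx)) hsin

theorem norm_mul_sub_mul_div_sq_le {x x' : ℂ} {y y' c K B : ℝ} (hc : 0 < c) (hy : c ≤ y)
    (hy' : |y'| ≤ K) (hB : ‖x‖ + ‖x'‖ ≤ B) :
    ‖(x' * y - x * y') / (y : ℂ) ^ 2‖ ≤ B * (1 / c + K / c ^ 2) := by
  have hy0 : 0 < y := hc.trans_le hy
  have hK : 0 ≤ K := (abs_nonneg _).trans hy'
  refine le_trans ?_ (mul_le_mul_of_nonneg_right hB (by positivity))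
  rw [norm_div, norm_pow, Complex.norm_real, norm_of_nonneg hy0.le, div_le_iff₀ (by positivity)]
  calc ‖x' * y - x * y'‖ ≤ ‖x'‖ * y + ‖x‖ * K := by
        refine (norm_sub_le _ _).trans (add_le_add ?_ ?_) <;>
          simp only [norm_mul, Complex.norm_real, Real.norm_eq_abs, abs_of_pos hy0, le_refl]
        exact mul_le_mul_of_nonneg_left hy' (norm_nonneg _)
    _ ≤ ‖x'‖ * (y ^ 2 / c) + ‖x‖ * (K / c ^ 2 * y ^ 2) := by
        have hyc : y ≤ y ^ 2 / c := by rw [le_div_iff₀ hc]; nlinarith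
        have hKc : K ≤ K / c ^ 2 * y ^ 2 := by
          rw [div_mul_eq_mul_div, le_div_iff₀ (by positivity)]
          exact mul_le_mul_of_nonneg_left (pow_le_pow_left₀ hc.le hy 2) hK
        gcongr
    _ ≤ ‖x'‖ * (y ^ 2 / c) + ‖x‖ * (K / c ^ 2 * y ^ 2) +
          (‖x‖ * (y ^ 2 / c) + ‖x'‖ * (K / c ^ 2 * y ^ 2)) :=
        le_add_of_nonneg_right (by positivity)
    _ = (‖x‖ + ‖x'‖) * (1 / c + K / c ^ 2) * y ^ 2 := by ring

theorem norm_integral_exp_neg_I_mul_le {φ h h' σ : ℝ → ℝ} {u u' : ℝ → ℂ} {a b t κ c K B : ℝ}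
    (hab : a ≤ b) (ht : 0 < t) (hκ : 0 < κ) (hc : 0 < c)
    (hφ : ∀ x ∈ Icc a b, HasDerivAt φ (κ * h x * σ x) x)
    (hh : ∀ x ∈ Icc a b, HasDerivAt h (h' x) x) (hhc : ∀ x ∈ Icc a b, c ≤ h x)
    (hh' : ∀ x ∈ Icc a b, |h' x| ≤ K)
    (hu : ∀ x ∈ Icc a b, HasDerivAt u (u' x) x) (hB : ∀ x ∈ Icc a b, ‖u x‖ + ‖u' x‖ ≤ B)
    (hint : IntervalIntegrable (fun x => Complex.exp (-I * φ x * t) * u x * σ x) volume a b) :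
    ‖∫ x in a..b, Complex.exp (-I * φ x * t) * u x * σ x‖ ≤
      B / (t * κ) * (2 / c + (b - a) * (1 / c + K / c ^ 2)) := by
  have hnorm_const : ‖I / ((t : ℂ) * κ)‖ = 1 / (t * κ) := by
    rw [norm_div, Complex.norm_I, norm_mul, Complex.norm_real, Complex.norm_real,
      norm_of_nonneg ht.le, norm_of_nonneg hκ.le]
  -- `w = i u / (t κ h)` is chosen so that `(e^{-itφ})' w = e^{-itφ} u σ`.
  have hw : ∀ x ∈ Icc a b, HasDerivAt (fun x => I / ((t : ℂ) * κ) * (u x / h x))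
      (I / ((t : ℂ) * κ) * ((u' x * h x - u x * h' x) / (h x : ℂ) ^ 2)) x := fun x hx =>
    ((hu x hx).div (hh x hx).ofReal_comp
      (by exact_mod_cast (hc.trans_le (hhc x hx)).ne')).const_mul _
  have hB0 : 0 ≤ B := (by positivity : (0 : ℝ) ≤ ‖u a‖ + ‖u' a‖).trans (hB a ⟨le_rfl, hab⟩)
  have hwx : ∀ x ∈ Icc a b, ‖I / ((t : ℂ) * κ) * (u x / h x)‖ ≤ B / (t * κ) * (1 / c) := by
    intro x hx
    rw [norm_mul, hnorm_const, norm_div, Complex.norm_real,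
      norm_of_nonneg (hc.le.trans (hhc x hx))]
    calc 1 / (t * κ) * (‖u x‖ / h x) ≤ 1 / (t * κ) * (B / c) := by
          refine mul_le_mul_of_nonneg_left (div_le_div₀ hB0 ?_ hc (hhc x hx)) (by positivity)
          exact (le_add_of_nonneg_right (norm_nonneg _)).trans (hB x hx)
      _ = B / (t * κ) * (1 / c) := by ring
  refine (norm_integral_le_of_eq_exp_mul_I_mul hab (φ := fun x => -(φ x * t))
    (ψ := fun x => -(κ * h x * σ x * t)) (fun x hx => ((hφ x hx).mul_const t).neg) hw
    (M := B / (t * κ) * (1 / c + K / c ^ 2)) (fun x hx => ?_) (fun x hx => ?_) hint).trans ?_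
  · rw [norm_mul, hnorm_const]
    calc 1 / (t * κ) * ‖(u' x * h x - u x * h' x) / (h x : ℂ) ^ 2‖
        ≤ 1 / (t * κ) * (B * (1 / c + K / c ^ 2)) := by
          gcongr
          exact norm_mul_sub_mul_div_sq_le hc (hhc x hx) (hh' x hx) (hB x hx)
      _ = B / (t * κ) * (1 / c + K / c ^ 2) := by ring
  · have hhne : (h x : ℂ) ≠ 0 := by exact_mod_cast (hc.trans_le (hhc x hx)).ne'
    have htne : (t : ℂ) ≠ 0 := by exact_mod_cast ht.ne'
    have hκne : (κ : ℂ) ≠ 0 := by exact_mod_cast hκ.ne'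
    push_cast
    field_simp
    rw [Complex.I_sq]
    ring
  · calc _ ≤ B / (t * κ) * (1 / c) + B / (t * κ) * (1 / c) +
          B / (t * κ) * (1 / c + K / c ^ 2) * (b - a) := by
          gcongr
          exacts [hwx a ⟨le_rfl, hab⟩, hwx b ⟨hab, le_rfl⟩]
      _ = _ := by ring

/-- `|p - r e|²` for a unit vector `e` at polar angle `θ` from `p`, where `pb = |p|`. -/
noncomputable def polarDistSq (pb r θ : ℝ) : ℝ := pb ^ 2 - 2 * pb * r * cos θ + r ^ 2

section PolarDistSq

variable {pb r θ : ℝ}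

theorem polarDistSq_eq_sub_sq (pb r θ : ℝ) :
    polarDistSq pb r θ = (pb - r) ^ 2 + 2 * pb * r * (1 - cos θ) := by
  unfold polarDistSq; ring

theorem polarDistSq_eq_add_sq (pb r θ : ℝ) :
    polarDistSq pb r θ = (pb + r) ^ 2 - 2 * pb * r * (1 + cos θ) := by
  unfold polarDistSq; ring

theorem sqrt_polarDistSq_le (hpb : 0 ≤ pb) (hr : 0 ≤ r) (θ : ℝ) :
    √(polarDistSq pb r θ) ≤ pb + r := by
  have : 0 ≤ 2 * pb * r * (1 + cos θ) :=
    mul_nonneg (by positivity) (by linarith [neg_one_le_cos θ])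
  rw [sqrt_le_left (by positivity), polarDistSq_eq_add_sq]
  linarith

theorem sqrt_polarDistSq_lt (hpb : 0 < pb) (hr : 0 < r) (hθ : -1 < cos θ) :
    √(polarDistSq pb r θ) < pb + r := by
  have : 0 < 2 * pb * r * (1 + cos θ) := mul_pos (by positivity) (by linarith)
  rw [sqrt_lt' (by positivity), polarDistSq_eq_add_sq]
  linarith

theorem mul_le_polarDistSq {ε : ℝ} (hpb : 0 ≤ pb) (hr : 0 ≤ r) (hθ : cos θ ≤ 1 - ε / 2) :
    pb * r * ε ≤ polarDistSq pb r θ := by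
  have : pb * r * ε ≤ 2 * pb * r * (1 - cos θ) := by
    nlinarith [mul_nonneg hpb hr]
  rw [polarDistSq_eq_sub_sq]
  nlinarith [sq_nonneg (pb - r)]

theorem hasDerivAt_sqrt_polarDistSq (hq : 0 < polarDistSq pb r θ) :
    HasDerivAt (fun θ => √(polarDistSq pb r θ)) (pb * r * sin θ / √(polarDistSq pb r θ)) θ := by
  have hq' : HasDerivAt (polarDistSq pb r) (2 * pb * r * sin θ) θ := by
    refine ((((hasDerivAt_cos θ).const_mul (2 * pb * r)).const_sub (pb ^ 2)).add_const
      (r ^ 2)).congr_deriv ?_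
    ring
  convert hq'.sqrt hq.ne' using 1
  field_simp

end PolarDistSq

structure IsUniformlyConvexProfile (R c₁ c₂ : ℝ) (E E' E'' : ℝ → ℝ) : Prop where
  hasDerivWithinAt : ∀ x ∈ Icc 0 R, HasDerivWithinAt E (E' x) (Icc 0 R) x
  hasDerivWithinAt_deriv : ∀ x ∈ Icc 0 R, HasDerivWithinAt E' (E'' x) (Icc 0 R) x
  deriv_zero : E' 0 = 0
  secondDeriv_mem : ∀ x ∈ Icc 0 R, E'' x ∈ Icc c₁ c₂

namespace IsUniformlyConvexProfile

variable {R c₁ c₂ x : ℝ} {E E' E'' : ℝ → ℝ}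

theorem continuousOn (hE : IsUniformlyConvexProfile R c₁ c₂ E E' E'') :
    ContinuousOn E (Icc 0 R) :=
  fun x hx => (hE.hasDerivWithinAt x hx).continuousWithinAt

theorem hasDerivAt (hE : IsUniformlyConvexProfile R c₁ c₂ E E' E'') (hx : x ∈ Ioo 0 R) :
    HasDerivAt E (E' x) x :=
  (hE.hasDerivWithinAt x (Ioo_subset_Icc_self hx)).hasDerivAt (Icc_mem_nhds hx.1 hx.2)

theorem hasDerivAt_deriv (hE : IsUniformlyConvexProfile R c₁ c₂ E E' E'') (hx : x ∈ Ioo 0 R) :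
    HasDerivAt E' (E'' x) x :=
  (hE.hasDerivWithinAt_deriv x (Ioo_subset_Icc_self hx)).hasDerivAt (Icc_mem_nhds hx.1 hx.2)

theorem deriv_mem_Icc (hE : IsUniformlyConvexProfile R c₁ c₂ E E' E'') (hx : x ∈ Icc 0 R) :
    E' x ∈ Icc (c₁ * x) (c₂ * x) := by
  have hcont : ContinuousOn E' (Icc 0 R) :=
    fun y hy => (hE.hasDerivWithinAt_deriv y hy).continuousWithinAt
  have hdiff : DifferentiableOn ℝ E' (interior (Icc 0 R)) := fun y hy =>
    (hE.hasDerivAt_deriv (by rwa [interior_Icc] at hy)).differentiableAt.differentiableWithinAt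
  have hderiv : ∀ y ∈ interior (Icc 0 R), deriv E' y ∈ Icc c₁ c₂ := fun y hy => by
    rw [interior_Icc] at hy
    rw [(hE.hasDerivAt_deriv hy).deriv]
    exact hE.secondDeriv_mem y (Ioo_subset_Icc_self hy)
  have h0 : (0 : ℝ) ∈ Icc 0 R := ⟨le_rfl, hx.1.trans hx.2⟩
  have hlow := (convex_Icc 0 R).mul_sub_le_image_sub_of_le_deriv hcont hdiff
    (fun y hy => (hderiv y hy).1) 0 h0 x hx hx.1
  have hupp := (convex_Icc 0 R).image_sub_le_mul_sub_of_deriv_le hcont hdiff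
    (fun y hy => (hderiv y hy).2) 0 h0 x hx hx.1
  rw [hE.deriv_zero, sub_zero, sub_zero] at hlow hupp
  exact ⟨hlow, hupp⟩

theorem hasDerivAt_deriv_div (hE : IsUniformlyConvexProfile R c₁ c₂ E E' E'') (hx : x ∈ Ioo 0 R) :
    HasDerivAt (fun y => E' y / y) ((E'' x * x - E' x) / x ^ 2) x :=
  (hE.hasDerivAt_deriv hx).fun_div (hasDerivAt_id' x) hx.1.ne' |>.congr_deriv (by ring)

theorem abs_deriv_deriv_div_le (hE : IsUniformlyConvexProfile R c₁ c₂ E E' E'')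
    (hx : x ∈ Ioo 0 R) : |(E'' x * x - E' x) / x ^ 2| ≤ (c₂ - c₁) / x := by
  have hx' := Ioo_subset_Icc_self hx
  obtain ⟨h₁, h₂⟩ := hE.secondDeriv_mem x hx'
  obtain ⟨h₃, h₄⟩ := hE.deriv_mem_Icc hx'
  have hx0 := hx.1
  have hnum : |E'' x * x - E' x| ≤ (c₂ - c₁) * x := abs_le.2 ⟨by nlinarith, by nlinarith⟩
  rw [abs_div, abs_of_pos (by positivity : 0 < x ^ 2), div_le_div_iff₀ (by positivity) hx0]
  nlinarith

theorem norm_integral_exp_mul_le (hE : IsUniformlyConvexProfile R c₁ c₂ E E' E'') (hc₁ : 0 < c₁)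
    {s s' σ : ℝ → ℝ} {u u' : ℝ → ℂ} {a b t κ L B : ℝ} (hab : a ≤ b) (ht : 0 < t) (hκ : 0 < κ)
    (hs : ∀ θ ∈ Icc a b, HasDerivAt s (s' θ) θ) (hsR : ∀ θ ∈ Icc a b, s θ ∈ Ioo 0 R)
    (hs'L : ∀ θ ∈ Icc a b, |s' θ| ≤ L * s θ) (hσ : ∀ θ ∈ Icc a b, s θ * s' θ = κ * σ θ)
    (hu : ∀ θ ∈ Icc a b, HasDerivAt u (u' θ) θ) (hB : ∀ θ ∈ Icc a b, ‖u θ‖ + ‖u' θ‖ ≤ B)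
    (hint : IntervalIntegrable
      (fun θ => Complex.exp (-I * E (s θ) * t) * u θ * σ θ) volume a b) :
    ‖∫ θ in a..b, Complex.exp (-I * E (s θ) * t) * u θ * σ θ‖ ≤
      B / (t * κ) * (2 / c₁ + (b - a) * (1 / c₁ + (c₂ - c₁) * L / c₁ ^ 2)) := by
  refine norm_integral_exp_neg_I_mul_le hab ht hκ hc₁ (φ := fun θ => E (s θ))
    (h := fun θ => E' (s θ) / s θ)
    (h' := fun θ => (E'' (s θ) * s θ - E' (s θ)) / s θ ^ 2 * s' θ) (fun θ hθ => ?_)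
    (fun θ hθ => (hE.hasDerivAt_deriv_div (hsR θ hθ)).comp θ (hs θ hθ)) (fun θ hθ => ?_)
    (fun θ hθ => ?_) hu hB hint
  · refine ((hE.hasDerivAt (hsR θ hθ)).comp θ (hs θ hθ)).congr_deriv ?_
    rw [mul_right_comm, ← hσ θ hθ]
    field_simp [(hsR θ hθ).1.ne']
  · rw [le_div_iff₀ (hsR θ hθ).1]
    exact (hE.deriv_mem_Icc (Ioo_subset_Icc_self (hsR θ hθ))).1
  · have hE'' := hE.abs_deriv_deriv_div_le (hsR θ hθ)
    calc _ ≤ (c₂ - c₁) / s θ * (L * s θ) := by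
          rw [abs_mul]
          exact mul_le_mul hE'' (hs'L θ hθ) (abs_nonneg _) ((abs_nonneg _).trans hE'')
      _ = (c₂ - c₁) * L := by field_simp [(hsR θ hθ).1.ne']

theorem norm_integral_polar_le_of_le_polarDistSq
    (hE : IsUniformlyConvexProfile R c₁ c₂ E E' E'') (hc₁ : 0 < c₁) (hc₁₂ : c₁ ≤ c₂)
    {pb r t ε a b B : ℝ} {u u' : ℝ → ℂ} (hpb : 0 < pb) (hr : 0 < r) (hpr : pb + r ≤ R)
    (ht : 0 < t) (hε : 0 < ε) (hε1 : ε ≤ 1) (ha : 0 ≤ a) (hab : a ≤ b) (hb : b < π)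
    (hq : ∀ θ ∈ Icc a b, pb * r * ε ≤ polarDistSq pb r θ)
    (hu : ∀ θ ∈ Icc a b, HasDerivAt u (u' θ) θ) (hB : ∀ θ ∈ Icc a b, ‖u θ‖ + ‖u' θ‖ ≤ B)
    (hint : IntervalIntegrable
      (fun θ => Complex.exp (-I * E (√(polarDistSq pb r θ)) * t) * u θ * sin θ) volume a b) :
    ‖∫ θ in a..b, Complex.exp (-I * E (√(polarDistSq pb r θ)) * t) * u θ * sin θ‖ ≤
      (2 + π) * c₂ / c₁ ^ 2 * (1 / (pb * r * t * ε)) * B := by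
  have hqpos : ∀ θ ∈ Icc a b, 0 < polarDistSq pb r θ := fun θ hθ =>
    (by positivity : 0 < pb * r * ε).trans_le (hq θ hθ)
  refine (hE.norm_integral_exp_mul_le hc₁ (s := fun θ => √(polarDistSq pb r θ))
    (s' := fun θ => pb * r * sin θ / √(polarDistSq pb r θ)) (κ := pb * r) (L := ε⁻¹) hab ht
    (by positivity) (fun θ hθ => hasDerivAt_sqrt_polarDistSq (hqpos θ hθ))
    (fun θ hθ => ⟨sqrt_pos.2 (hqpos θ hθ), (sqrt_polarDistSq_lt hpb hr ?_).trans_le hpr⟩)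
    (fun θ hθ => ?_) (fun θ hθ => ?_) hu hB hint).trans ?_
  · simpa only [cos_pi] using
      cos_lt_cos_of_nonneg_of_le_pi (ha.trans hθ.1) le_rfl (hθ.2.trans_lt hb)
  · have hs := sqrt_pos.2 (hqpos θ hθ)
    rw [abs_div, abs_mul, abs_of_pos (mul_pos hpb hr), abs_of_pos hs, div_le_iff₀ hs, mul_assoc ε⁻¹,
      mul_self_sqrt (hqpos θ hθ).le, le_inv_mul_iff₀ hε]
    calc ε * (pb * r * |sin θ|) ≤ pb * r * ε := by
          have := mul_le_mul_of_nonneg_left (abs_sin_le_one θ) (by positivity : 0 ≤ ε * (pb * r))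
          linarith
      _ ≤ _ := hq θ hθ
  · field_simp [(sqrt_pos.2 (hqpos θ hθ)).ne']
  · have hB0 : 0 ≤ B := (by positivity : (0 : ℝ) ≤ ‖u a‖ + ‖u' a‖).trans (hB a ⟨le_rfl, hab⟩)
    have hspread : 0 ≤ (c₂ - c₁) * ε⁻¹ / c₁ ^ 2 :=
      div_nonneg (mul_nonneg (sub_nonneg.2 hc₁₂) (inv_nonneg.2 hε.le)) (by positivity)
    have hfreq : 1 / c₁ + (c₂ - c₁) * ε⁻¹ / c₁ ^ 2 ≤ c₂ / (c₁ ^ 2 * ε) := by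
      field_simp
      nlinarith [mul_le_mul_of_nonneg_left hε1 hc₁.le]
    have hlen := mul_le_mul (show b - a ≤ π by linarith) hfreq
      (add_nonneg (by positivity) hspread) pi_pos.le
    calc B / (t * (pb * r)) * (2 / c₁ + (b - a) * (1 / c₁ + (c₂ - c₁) * ε⁻¹ / c₁ ^ 2))
        ≤ B / (t * (pb * r)) * (2 * (c₂ / (c₁ ^ 2 * ε)) + π * (c₂ / (c₁ ^ 2 * ε))) := by
          rw [div_eq_mul_one_div 2 c₁]
          exact mul_le_mul_of_nonneg_left (by linarith) (by positivity)
      _ = (2 + π) * c₂ / c₁ ^ 2 * (1 / (pb * r * t * ε)) * B := by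
          field_simp

theorem continuousOn_exp_mul_sin (hE : IsUniformlyConvexProfile R c₁ c₂ E E' E'')
    {pb r t : ℝ} {u : ℝ → ℂ} (hpb : 0 ≤ pb) (hr : 0 ≤ r) (hpr : pb + r ≤ R)
    (hu : ContinuousOn u (Icc 0 π)) :
    ContinuousOn
      (fun θ => Complex.exp (-I * E (√(polarDistSq pb r θ)) * t) * u θ * sin θ) (Icc 0 π) := by
  have hEs : ContinuousOn (fun θ => (E (√(polarDistSq pb r θ)) : ℂ)) (Icc 0 π) :=
    Complex.continuous_ofReal.comp_continuousOn <| hE.continuousOn.comp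
      (by unfold polarDistSq; fun_prop) fun θ _ =>
        ⟨sqrt_nonneg _, (sqrt_polarDistSq_le hpb hr θ).trans hpr⟩
  have hsin : Continuous fun θ => (sin θ : ℂ) := Complex.continuous_ofReal.comp continuous_sin
  fun_prop

theorem norm_integral_polar_le (hE : IsUniformlyConvexProfile R c₁ c₂ E E' E'') (hc₁ : 0 < c₁)
    (hc₁₂ : c₁ ≤ c₂) {pb r t ε B₀ B₁ : ℝ} {u u' : ℝ → ℂ} (hpb : 0 < pb) (hr : 0 < r)
    (hpr : pb + r ≤ R) (ht : 0 < t) (hε : 0 < ε) (hε1 : ε ≤ 1)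
    (hu : ∀ θ ∈ Icc 0 π, HasDerivWithinAt u (u' θ) (Icc 0 π) θ)
    (hB₀ : ∀ θ ∈ Icc 0 π, ‖u θ‖ ≤ B₀) (hB₁ : ∀ θ ∈ Icc 0 π, ‖u θ‖ + ‖u' θ‖ ≤ B₁) :
    ‖∫ θ in 0..π, Complex.exp (-I * E (√(polarDistSq pb r θ)) * t) * u θ * sin θ‖ ≤
      ε * B₀ + (2 + π) * c₂ / c₁ ^ 2 * (1 / (pb * r * t * ε)) * B₁ := by
  -- The caps `[0, δ]` and `[π - δ, π]` carry `∫ sin = ε / 2` each, and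
  -- `pb r ε ≤ polarDistSq pb r θ` between them.
  set δ := arccos (1 - ε / 2)
  have hcosδ : cos δ = 1 - ε / 2 := cos_arccos (by linarith) (by linarith)
  have hδ0 : 0 < δ := arccos_pos.2 (by linarith)
  have hδπ : δ < π / 2 := arccos_lt_pi_div_two.2 (by linarith)
  have hcont := hE.continuousOn_exp_mul_sin (t := t) hpb.le hr.le hpr
    (fun θ hθ => (hu θ hθ).continuousWithinAt)
  have hint : ∀ a b, 0 ≤ a → a ≤ b → b ≤ π → IntervalIntegrable
      (fun θ => Complex.exp (-I * E (√(polarDistSq pb r θ)) * t) * u θ * sin θ) volume a b :=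
    fun a b ha hab hb =>
      (hcont.mono (by rw [uIcc_of_le hab]; exact Icc_subset_Icc ha hb)).intervalIntegrable
  have hedge : ∀ a b, 0 ≤ a → a ≤ b → b ≤ π →
      ‖∫ θ in a..b, Complex.exp (-I * E (√(polarDistSq pb r θ)) * t) * u θ * sin θ‖ ≤
        B₀ * (cos a - cos b) := fun a b ha hab hb =>
    norm_integral_mul_sin_le ha hab hb fun θ hθ => by
      rw [norm_mul, norm_exp_neg_I_mul_mul, one_mul]
      exact hB₀ θ ⟨ha.trans hθ.1, hθ.2.trans hb⟩
  have hleft := hedge 0 δ le_rfl hδ0.le (by linarith)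
  have hright := hedge (π - δ) π (by linarith) (by linarith) le_rfl
  rw [cos_zero, hcosδ] at hleft
  rw [cos_pi_sub, cos_pi, hcosδ] at hright
  have hmiddle := hE.norm_integral_polar_le_of_le_polarDistSq hc₁ hc₁₂ hpb hr hpr ht hε hε1
    hδ0.le (by linarith) (by linarith)
    (fun θ hθ => mul_le_polarDistSq hpb.le hr.le <| hcosδ ▸
      cos_le_cos_of_nonneg_of_le_pi hδ0.le (by linarith [hθ.2]) hθ.1)
    (fun θ hθ => (hu θ ⟨by linarith [hθ.1], by linarith [hθ.2]⟩).hasDerivAt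
      (Icc_mem_nhds (by linarith [hθ.1]) (by linarith [hθ.2])))
    (fun θ hθ => hB₁ θ ⟨by linarith [hθ.1], by linarith [hθ.2]⟩)
    (hint δ (π - δ) hδ0.le (by linarith) (by linarith))
  rw [← intervalIntegral.integral_add_adjacent_intervals (hint 0 δ le_rfl hδ0.le (by linarith))
      (hint δ π hδ0.le (by linarith) le_rfl),
    ← intervalIntegral.integral_add_adjacent_intervals
      (hint δ (π - δ) hδ0.le (by linarith) (by linarith))
      (hint (π - δ) π (by linarith) (by linarith) le_rfl)]
  calc _ ≤ B₀ * (1 - (1 - ε / 2)) + ((2 + π) * c₂ / c₁ ^ 2 * (1 / (pb * r * t * ε)) * B₁ +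
        B₀ * (-(1 - ε / 2) - -1)) :=
        (norm_add_le _ _).trans (add_le_add hleft ((norm_add_le _ _).trans
          (add_le_add hmiddle hright)))
    _ = _ := by ring

end IsUniformlyConvexProfile

theorem angular_stationary_phase (c₁ c₂ : ℝ) (hc₁ : 0 < c₁) (hc₁₂ : c₁ ≤ c₂) :
    ∃ c : ℝ, 0 < c ∧
      ∀ (R : ℝ), 0 < R → ∀ (E E' E'' : ℝ → ℝ),
        (∀ u ∈ Set.Icc (0:ℝ) R, HasDerivWithinAt E (E' u) (Set.Icc 0 R) u) →
        (∀ u ∈ Set.Icc (0:ℝ) R, HasDerivWithinAt E' (E'' u) (Set.Icc 0 R) u) →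
        ContinuousOn E'' (Set.Icc 0 R) →
        E' 0 = 0 →
        (∀ u ∈ Set.Icc (0:ℝ) R, c₁ ≤ E'' u ∧ E'' u ≤ c₂) →
        ∀ (pb r t ε : ℝ), 0 < pb → 0 < r → pb + r ≤ R → 0 < t → 0 < ε → ε ≤ 1 →
        ∀ (f fθ : ℝ → ℝ → ℂ),
          ContinuousOn (fun q : ℝ × ℝ => f q.1 q.2)
            (Set.Icc 0 Real.pi ×ˢ Set.Icc 0 (2 * Real.pi)) →
          (∀ θ ∈ Set.Icc (0:ℝ) Real.pi, ∀ φ ∈ Set.Icc (0:ℝ) (2 * Real.pi),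
            HasDerivWithinAt (fun θ' => f θ' φ) (fθ θ φ) (Set.Icc 0 Real.pi) θ) →
          ContinuousOn (fun q : ℝ × ℝ => fθ q.1 q.2)
            (Set.Icc 0 Real.pi ×ˢ Set.Icc 0 (2 * Real.pi)) →
        ∀ B₀ B₁ : ℝ,
          (∀ θ ∈ Set.Icc (0:ℝ) Real.pi, ∀ φ ∈ Set.Icc (0:ℝ) (2 * Real.pi),
            ‖f θ φ‖ ≤ B₀) →
          (∀ θ ∈ Set.Icc (0:ℝ) Real.pi, ∀ φ ∈ Set.Icc (0:ℝ) (2 * Real.pi),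
            ‖f θ φ‖ + ‖fθ θ φ‖ ≤ B₁) →
          ‖∫ φ in (0:ℝ)..(2 * Real.pi), ∫ θ in (0:ℝ)..Real.pi,
              Complex.exp (-Complex.I *
                  (E (Real.sqrt (pb ^ 2 - 2 * pb * r * Real.cos θ + r ^ 2)) : ℂ) *
                  (t : ℂ)) * f θ φ * (Real.sin θ : ℂ)‖
            ≤ c * (ε * B₀ + 1 / (pb * r * t * ε) * B₁) := by
  set K := (2 + π) * c₂ / c₁ ^ 2
  have hK : 0 ≤ K := by have := hc₁.trans_le hc₁₂; positivity
  refine ⟨2 * π * (1 + K), by positivity, ?_⟩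
  intro R _ E E' E'' hE hE' _ hE'0 hE'' pb r t ε hpb hr hpr ht hε hε1 f fθ _ hfθ _ B₀ B₁ hB₀ hB₁
  have hprofile : IsUniformlyConvexProfile R c₁ c₂ E E' E'' := ⟨hE, hE', hE'0, hE''⟩
  have hθ₀ : (0 : ℝ) ∈ Icc 0 π := ⟨le_rfl, pi_pos.le⟩
  have hφ₀ : (0 : ℝ) ∈ Icc 0 (2 * π) := ⟨le_rfl, two_pi_pos.le⟩
  have hB₀0 : 0 ≤ B₀ := (norm_nonneg _).trans (hB₀ 0 hθ₀ 0 hφ₀)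
  have hB₁0 : 0 ≤ B₁ := (by positivity : (0 : ℝ) ≤ ‖f 0 0‖ + ‖fθ 0 0‖).trans (hB₁ 0 hθ₀ 0 hφ₀)
  have hinner := fun φ (hφ : φ ∈ uIoc 0 (2 * π)) =>
    have hφ' : φ ∈ Icc 0 (2 * π) := by
      rw [uIoc_of_le two_pi_pos.le] at hφ
      exact ⟨hφ.1.le, hφ.2⟩
    hprofile.norm_integral_polar_le hc₁ hc₁₂ hpb hr hpr ht hε hε1 (u := fun θ => f θ φ)
      (fun θ hθ => hfθ θ hθ φ hφ') (fun θ hθ => hB₀ θ hθ φ hφ') (fun θ hθ => hB₁ θ hθ φ hφ')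
  refine (intervalIntegral.norm_integral_le_of_norm_le_const hinner).trans ?_
  rw [sub_zero, abs_of_pos two_pi_pos]
  have hslack : 0 ≤ 2 * π * (K * (ε * B₀) + 1 / (pb * r * t * ε) * B₁) := by positivity
  linarith
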